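/- Let G be a graph in which every two distinct cycles are edge-disjoint (a cactus forest). Then G contains no subdivision of K_4 minus an edge. -/

import Mathlib

/-- `G` is a cactus forest: any two cycles sharing an edge have the same edge set,
i.e. every two distinct cycles are edge-disjoint. -/
def IsCactusForest {V : Type*} (G : SimpleGraph V) : Prop :=
  ∀ (u v : V) (c₁ : G.Walk u u) (c₂ : G.Walk v v), c₁.IsCycle → c₂.IsCycle →
    (∃ e, e ∈ c₁.edges ∧ e ∈ c₂.edges) → {e | e ∈ c₁.edges} = {e | e ∈ c₂.edges}

/-- `G` contains a subdivision of `K₄` minus an edge: four distinct branch vertices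
`a, b, c, d` and internally disjoint paths realizing the five edges
`ab, ac, ad, bc, bd`. -/
def HasK4MinusESubdivision {V : Type*} (G : SimpleGraph V) : Prop :=
  ∃ (a b c d : V), a ≠ b ∧ a ≠ c ∧ a ≠ d ∧ b ≠ c ∧ b ≠ d ∧ c ≠ d ∧
  ∃ (p₁ : G.Walk a b) (p₂ : G.Walk a c) (p₃ : G.Walk a d)
    (p₄ : G.Walk b c) (p₅ : G.Walk b d),
    p₁.IsPath ∧ p₂.IsPath ∧ p₃.IsPath ∧ p₄.IsPath ∧ p₅.IsPath ∧
    ∀ L ∈ [(p₁.support, ({a, b} : Set V)), (p₂.support, {a, c}), (p₃.support, {a, d}),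
           (p₄.support, {b, c}), (p₅.support, {b, d})],
    ∀ M ∈ [(p₁.support, ({a, b} : Set V)), (p₂.support, {a, c}), (p₃.support, {a, d}),
           (p₄.support, {b, c}), (p₅.support, {b, d})],
      L ≠ M → ∀ x, x ∈ L.1 → x ∈ M.1 → x ∈ L.2 ∧ x ∈ M.2


/-!
The paths `a–b`, `a–c–b` and `a–d–b` of a subdivided `K₄ − e` form a theta graph: three
internally disjoint `a–b` paths, the last two of length at least two. Closing the first path
with each of the other two gives two cycles that share the edges of the first path, while the
edges of the third path lie on the second cycle only. In a cactus forest this is impossible.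
-/

namespace SimpleGraph.Walk

variable {V : Type*} {G : SimpleGraph V} {u v w x y : V}

lemma IsPath.start_notMem_support_tail {p : G.Walk u v} (hp : p.IsPath) :
    u ∉ p.support.tail :=
  (List.nodup_cons.mp (p.cons_tail_support ▸ hp.support_nodup)).1

lemma IsPath.append {p : G.Walk u v} {q : G.Walk v w} (hp : p.IsPath) (hq : q.IsPath)
    (h : ∀ z ∈ p.support, z ∈ q.support → z = v) : (p.append q).IsPath := by
  rw [isPath_def, support_append, List.nodup_append']
  refine ⟨hp.support_nodup, hq.support_nodup.tail, fun z hzp hzq => ?_⟩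
  obtain rfl := h z hzp (List.mem_of_mem_tail hzq)
  exact hq.start_notMem_support_tail hzq

def InternallyDisjoint (p q : G.Walk x y) : Prop :=
  ∀ z ∈ p.support, z ∈ q.support → z = x ∨ z = y

lemma InternallyDisjoint.isCycle_append_reverse {p q : G.Walk x y} (hp : p.IsPath)
    (hq : q.IsPath) (hq₁ : 1 < q.length) (h : p.InternallyDisjoint q) :
    (p.append q.reverse).IsCycle := by
  refine hp.isCycle_append hq.reverse (fun z hzp hzq => ?_) (Or.inr (by simpa using hq₁))
  rcases h z (List.mem_of_mem_tail hzp) (by simpa using List.mem_of_mem_tail hzq) with rfl | rfl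
  · exact hp.start_notMem_support_tail hzp
  · exact hq.reverse.start_notMem_support_tail hzq

/-- Only the edge `s(x, y)` can lie on both walks, and a path through it has length one. -/
lemma InternallyDisjoint.notMem_edges {p q : G.Walk x y} (hq : q.IsPath) (hq₁ : 1 < q.length)
    (h : p.InternallyDisjoint q) {e : Sym2 V} (he : e ∈ q.edges) : e ∉ p.edges := by
  induction e using Sym2.ind with | _ s t => ?_
  intro hep
  have hst : s ≠ t := (p.adj_of_mem_edges hep).ne
  have hs := h s (p.fst_mem_support_of_mem_edges hep) (q.fst_mem_support_of_mem_edges he)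
  have ht := h t (p.snd_mem_support_of_mem_edges hep) (q.snd_mem_support_of_mem_edges he)
  have hxy : s(x, y) ∈ q.edges := by
    rcases hs with rfl | rfl <;> rcases ht with rfl | rfl
    all_goals first | exact absurd rfl hst | simpa [Sym2.eq_swap] using he
  exact hq₁.ne' (hq.length_eq_one_of_mem_edges hxy)

/-- `P` may be a single edge, but `Q` and `R` may not: then `P` closes up with either of them
to a cycle. -/
structure IsTheta (P Q R : G.Walk x y) : Prop where
  isPath_left : P.IsPath
  isPath_mid : Q.IsPath
  isPath_right : R.IsPath
  one_lt_length_mid : 1 < Q.length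
  one_lt_length_right : 1 < R.length
  left_mid : P.InternallyDisjoint Q
  left_right : P.InternallyDisjoint R
  mid_right : Q.InternallyDisjoint R

end SimpleGraph.Walk

open SimpleGraph Walk

section

variable {V : Type*} {G : SimpleGraph V}

theorem IsCactusForest.not_isTheta (hG : IsCactusForest G) {x y : V} (P Q R : G.Walk x y) :
    ¬ P.IsTheta Q R := by
  intro h
  have hxy : x ≠ y := by
    rintro rfl
    have := length_eq_zero_iff.mpr (isPath_iff_nil.mp h.isPath_mid)
    have := h.one_lt_length_mid
    omega
  have edge (p : G.Walk x y) : ∃ e, e ∈ p.edges :=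
    List.exists_mem_of_ne_nil _ (edges_eq_nil.not.mpr (not_nil_of_ne hxy))
  obtain ⟨e, he⟩ := edge P
  obtain ⟨f, hf⟩ := edge R
  have hC₁ := h.left_mid.isCycle_append_reverse h.isPath_left h.isPath_mid h.one_lt_length_mid
  have hC₂ := h.left_right.isCycle_append_reverse h.isPath_left h.isPath_right
    h.one_lt_length_right
  have hsame := hG x x _ _ hC₁ hC₂ ⟨e, by simp [he], by simp [he]⟩
  have hf₂ : f ∈ (P.append R.reverse).edges := by simp [hf]
  have hf₁ : f ∉ (P.append Q.reverse).edges := by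
    simp [h.left_right.notMem_edges h.isPath_right h.one_lt_length_right hf,
      h.mid_right.notMem_edges h.isPath_right h.one_lt_length_right hf]
  exact hf₁ (hsame ▸ hf₂ : f ∈ {e | e ∈ (P.append Q.reverse).edges})

theorem HasK4MinusESubdivision.exists_isTheta (hK : HasK4MinusESubdivision G) :
    ∃ (x y : V) (P Q R : G.Walk x y), P.IsTheta Q R := by
  obtain ⟨a, b, c, d, hab, hac, had, hbc, hbd, hcd,
    p₁, p₂, p₃, p₄, p₅, hp₁, hp₂, hp₃, hp₄, hp₅, hdisj⟩ := hK
  set l : List (List V × Set V) := [(p₁.support, {a, b}), (p₂.support, {a, c}),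
    (p₃.support, {a, d}), (p₄.support, {b, c}), (p₅.support, {b, d})]
  have meet {u₁ v₁ u₂ v₂ : V} (p : G.Walk u₁ v₁) (q : G.Walk u₂ v₂)
      (hp : (p.support, ({u₁, v₁} : Set V)) ∈ l) (hq : (q.support, ({u₂, v₂} : Set V)) ∈ l)
      (hne : ({u₁, v₁} : Set V) ≠ {u₂, v₂}) :
      ∀ z ∈ p.support, z ∈ q.support → (z = u₁ ∨ z = v₁) ∧ (z = u₂ ∨ z = v₂) := by
    intro z hzp hzq
    simpa using hdisj _ hp _ hq (ne_of_apply_ne Prod.snd hne) z hzp hzq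
  have h12 := meet p₁ p₂ (by simp [l]) (by simp [l]) (by simp [Set.pair_eq_pair_iff, *])
  have h13 := meet p₁ p₃ (by simp [l]) (by simp [l]) (by simp [Set.pair_eq_pair_iff, *])
  have h14 := meet p₁ p₄ (by simp [l]) (by simp [l]) (by simp [Set.pair_eq_pair_iff, *])
  have h15 := meet p₁ p₅ (by simp [l]) (by simp [l]) (by simp [Set.pair_eq_pair_iff, *])
  have h23 := meet p₂ p₃ (by simp [l]) (by simp [l]) (by simp [Set.pair_eq_pair_iff, *])
  have h24 := meet p₂ p₄ (by simp [l]) (by simp [l]) (by simp [Set.pair_eq_pair_iff, *])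
  have h25 := meet p₂ p₅ (by simp [l]) (by simp [l]) (by simp [Set.pair_eq_pair_iff, *])
  have h34 := meet p₃ p₄ (by simp [l]) (by simp [l]) (by simp [Set.pair_eq_pair_iff, *])
  have h35 := meet p₃ p₅ (by simp [l]) (by simp [l]) (by simp [Set.pair_eq_pair_iff, *])
  have h45 := meet p₄ p₅ (by simp [l]) (by simp [l]) (by simp [Set.pair_eq_pair_iff, *])
  clear meet hdisj
  have pos {u v : V} (p : G.Walk u v) (huv : u ≠ v) : 0 < p.length :=
    not_nil_iff_lt_length.mp (not_nil_of_ne huv)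
  refine ⟨a, b, p₁, p₂.append p₄.reverse, p₃.append p₅.reverse,
    ⟨hp₁, ?_, ?_, ?_, ?_, ?_, ?_, ?_⟩⟩
  · exact hp₂.append hp₄.reverse fun z h₂ h₄ => by grind [support_reverse]
  · exact hp₃.append hp₅.reverse fun z h₃ h₅ => by grind [support_reverse]
  · simp only [length_append, length_reverse]
    linarith [pos p₂ hac, pos p₄ hbc]
  · simp only [length_append, length_reverse]
    linarith [pos p₃ had, pos p₅ hbd]
  all_goals
    intro z hz hz'
    simp only [mem_support_append_iff, support_reverse, List.mem_reverse] at hz hz'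
    grind

end

/-- A cactus forest (every two distinct cycles edge-disjoint) contains no
subdivision of `K₄` minus an edge. -/
theorem cactusForest_no_K4MinusE_subdivision {V : Type*} (G : SimpleGraph V)
    (hG : IsCactusForest G) : ¬ HasK4MinusESubdivision G := by
  intro hK
  obtain ⟨x, y, P, Q, R, hθ⟩ := hK.exists_isTheta
  exact hG.not_isTheta P Q R hθ
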